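/- arXiv:1811.11091 — 4 statements merged into one kernel-verified Lean document; each statement's English description precedes it below -/
import Mathlib

section
/- Let Y be an I×J×K real tensor with Tucker decomposition Y = G ×₁ U ×₂ V ×₃ W, where G ∈ ℝ^{R₁×R₂×R₃} and U, V, W have full column ranks R₁, R₂, R₃. Let P₁ ∈ ℝ^{I_H×I}, P₂ ∈ ℝ^{J_H×J}, P_M ∈ ℝ^{K_M×K}. Define Y_M = Y ×₃ P_M and Y_H = Y ×₁ P₁ ×₂ P₂. Suppose rank of the first unfolding of Y_M is R₁, of the second unfolding of Y_M is R₂, of the third unfolding of Y_H is R₃, and additionally either (a) rank(P₁U) = R₁ and rank(P₂V) = R₂, or (b) rank(P_M W) = R₃. Then Y is the unique tensor of multilinear rank at most (R₁,R₂,R₃) satisfying Ŷ ×₃ P_M = Y_M and Ŷ ×₁ P₁ ×₂ P₂ = Y_H. -/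
open Matrix
open scoped Kronecker

/-- Mode-1 contraction of a third-order tensor with a matrix. -/
def contract1 {I I' J K : ℕ} (P : Matrix (Fin I') (Fin I) ℝ)
    (Y : Fin I → Fin J → Fin K → ℝ) : Fin I' → Fin J → Fin K → ℝ :=
  fun i j k => ∑ l, P i l * Y l j k

/-- Mode-2 contraction of a third-order tensor with a matrix. -/
def contract2 {I J J' K : ℕ} (P : Matrix (Fin J') (Fin J) ℝ)
    (Y : Fin I → Fin J → Fin K → ℝ) : Fin I → Fin J' → Fin K → ℝ :=
  fun i j k => ∑ l, P j l * Y i l k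

/-- Mode-3 contraction of a third-order tensor with a matrix. -/
def contract3 {I J K K' : ℕ} (P : Matrix (Fin K') (Fin K) ℝ)
    (Y : Fin I → Fin J → Fin K → ℝ) : Fin I → Fin J → Fin K' → ℝ :=
  fun i j k => ∑ l, P k l * Y i j l

/-- Tucker (multilinear) product of a core tensor with three factor matrices. -/
def tucker {I J K R₁ R₂ R₃ : ℕ} (G : Fin R₁ → Fin R₂ → Fin R₃ → ℝ)
    (U : Matrix (Fin I) (Fin R₁) ℝ) (V : Matrix (Fin J) (Fin R₂) ℝ)
    (W : Matrix (Fin K) (Fin R₃) ℝ) : Fin I → Fin J → Fin K → ℝ :=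
  fun i j k => ∑ p, ∑ q, ∑ r, G p q r * U i p * V j q * W k r

/-- First (mode-1) unfolding, column-major: row index (k,j) with j fastest. -/
def unfold1 {I J K : ℕ} (Y : Fin I → Fin J → Fin K → ℝ) :
    Matrix (Fin K × Fin J) (Fin I) ℝ := fun p i => Y i p.2 p.1

/-- Second (mode-2) unfolding. -/
def unfold2 {I J K : ℕ} (Y : Fin I → Fin J → Fin K → ℝ) :
    Matrix (Fin K × Fin I) (Fin J) ℝ := fun p j => Y p.2 j p.1

/-- Third (mode-3) unfolding. -/
def unfold3 {I J K : ℕ} (Y : Fin I → Fin J → Fin K → ℝ) :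
    Matrix (Fin J × Fin I) (Fin K) ℝ := fun p k => Y p.2 p.1 k

/-- The tensor has multilinear rank at most (R₁,R₂,R₃). -/
def mlrankLE {I J K : ℕ} (Y : Fin I → Fin J → Fin K → ℝ) (R₁ R₂ R₃ : ℕ) : Prop :=
  ∃ (G : Fin R₁ → Fin R₂ → Fin R₃ → ℝ) (U : Matrix (Fin I) (Fin R₁) ℝ)
    (V : Matrix (Fin J) (Fin R₂) ℝ) (W : Matrix (Fin K) (Fin R₃) ℝ),
    Y = tucker G U V W

/-- Frobenius norm of a third-order tensor. -/
noncomputable def frob {I J K : ℕ} (Y : Fin I → Fin J → Fin K → ℝ) : ℝ :=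
  Real.sqrt (∑ i, ∑ j, ∑ k, (Y i j k) ^ 2)

/-- `X` is the Moore–Penrose pseudoinverse of `A` (the four Penrose conditions). -/
def IsMPInv {m n : Type*} [Fintype m] [Fintype n] (A : Matrix m n ℝ)
    (X : Matrix n m ℝ) : Prop :=
  A * X * A = A ∧ X * A * X = X ∧ (A * X)ᵀ = A * X ∧ (X * A)ᵀ = X * A

/-- Polyadic (CP) combination of factor matrices. -/
def cp {I J K F : ℕ} (A : Matrix (Fin I) (Fin F) ℝ) (B : Matrix (Fin J) (Fin F) ℝ)
    (C : Matrix (Fin K) (Fin F) ℝ) : Fin I → Fin J → Fin K → ℝ :=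
  fun i j k => ∑ r, A i r * B j r * C k r

/-- Khatri–Rao (columnwise Kronecker) product. -/
def khatriRao {n m F : ℕ} (N : Matrix (Fin n) (Fin F) ℝ) (M : Matrix (Fin m) (Fin F) ℝ) :
    Matrix (Fin n × Fin m) (Fin F) ℝ := fun p r => N p.1 r * M p.2 r

/-!
Write a competitor as `Z = G' ×₁ U' ×₂ V' ×₃ W'`. The mode-`n` unfolding of a compressed tensor
on which `Z` and `Y` agree factors through the `n`-th factor of each; as its rank equals the width
of `Z`'s factor, the column space of `Z`'s factor is that of the unfolding, hence lies in the
column space of `Y`'s factor. In case (a), `P₁ U` and `P₂ V` have left inverses `L₁`, `L₂`, so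
`U L₁ P₁` and `V L₂ P₂` fix the first two factors of both tensors, and applying `U L₁`, `V L₂` to
the equal `(P₁, P₂)`-compressions recovers `Z = Y`. Case (b) is the same argument in mode 3.
-/

namespace Matrix

variable {m n n' o K : Type*} [Fintype n] [Fintype n'] [Field K]

theorem exists_mul_eq_one_of_rank_eq_card [Fintype m] [DecidableEq n] {A : Matrix m n K}
    (hA : A.rank = Fintype.card n) : ∃ L : Matrix n m K, L * A = 1 := by
  classical
  have hker : LinearMap.ker A.mulVecLin = ⊥ := by
    have := LinearMap.finrank_range_add_finrank_ker A.mulVecLin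
    rwa [← rank, hA, Module.finrank_fintype_fun_eq_card, add_eq_left,
      Submodule.finrank_eq_zero] at this
  obtain ⟨g, hg⟩ := A.mulVecLin.exists_leftInverse_of_injective hker
  refine ⟨LinearMap.toMatrix' g, ?_⟩
  rw [← LinearMap.toMatrix'_toLin' A, ← LinearMap.toMatrix'_comp, toLin'_apply', hg,
    LinearMap.toMatrix'_id]

theorem exists_eq_mul_of_range_le {A : Matrix m n K} {C : Matrix m n' K}
    (h : LinearMap.range C.mulVecLin ≤ LinearMap.range A.mulVecLin) :
    ∃ M : Matrix n n' K, C = A * M := by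
  classical
  have hcol : ∀ j, ∃ x, A *ᵥ x = fun i => C i j := fun j =>
    h ⟨Pi.single j 1, by ext; simp⟩
  choose x hx using hcol
  refine ⟨of fun i j => x j i, ?_⟩
  ext i j
  simpa [mul_apply, mulVec, dotProduct] using (congrFun (hx j) i).symm

theorem exists_eq_mul_of_mul_eq_of_rank_eq_card [Fintype m] [Fintype o]
    {A : Matrix m n K} {B : Matrix n o K} {C : Matrix m n' K} {D : Matrix n' o K}
    (h : A * B = C * D) (hr : (A * B).rank = Fintype.card n') :
    ∃ M : Matrix n n' K, C = A * M := by
  have hCD : LinearMap.range (C * D).mulVecLin ≤ LinearMap.range C.mulVecLin := by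
    rw [mulVecLin_mul]; exact LinearMap.range_comp_le_range _ _
  have hC : LinearMap.range C.mulVecLin = LinearMap.range (A * B).mulVecLin := by
    rw [h] at hr ⊢
    refine (Submodule.eq_of_le_of_finrank_le hCD ?_).symm
    change C.rank ≤ (C * D).rank
    exact hr ▸ C.rank_le_card_width
  refine exists_eq_mul_of_range_le (hC.trans_le ?_)
  rw [mulVecLin_mul]; exact LinearMap.range_comp_le_range _ _

theorem mul_mul_mul_cancel {p α : Type*} [Fintype m] [Fintype o] [DecidableEq n] [Semiring α]
    {L : Matrix n m α} {P : Matrix m o α} {A : Matrix o n α} (hL : L * (P * A) = 1)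
    (M : Matrix n p α) : L * (P * (A * M)) = M := by
  rw [← Matrix.mul_assoc P, ← Matrix.mul_assoc, hL, Matrix.one_mul]

end Matrix

section Tucker

variable {I J K I' J' K' R₁ R₂ R₃ R₁' R₂' R₃' : ℕ}
  {G : Fin R₁ → Fin R₂ → Fin R₃ → ℝ} {U : Matrix (Fin I) (Fin R₁) ℝ}
  {V : Matrix (Fin J) (Fin R₂) ℝ} {W : Matrix (Fin K) (Fin R₃) ℝ}
  {G' : Fin R₁' → Fin R₂' → Fin R₃' → ℝ} {U' : Matrix (Fin I) (Fin R₁') ℝ}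
  {V' : Matrix (Fin J) (Fin R₂') ℝ} {W' : Matrix (Fin K) (Fin R₃') ℝ}

theorem contract1_tucker (P : Matrix (Fin I') (Fin I) ℝ) :
    contract1 P (tucker G U V W) = tucker G (P * U) V W := by
  funext i j k
  simp only [contract1, tucker, mul_apply, Finset.mul_sum, Finset.sum_mul]
  rw [Finset.sum_comm]
  simp_rw [Finset.sum_comm (γ := Fin I), mul_assoc, mul_left_comm (P i _)]

theorem contract2_tucker (P : Matrix (Fin J') (Fin J) ℝ) :
    contract2 P (tucker G U V W) = tucker G U (P * V) W := by
  funext i j k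
  simp only [contract2, tucker, mul_apply, Finset.mul_sum, Finset.sum_mul]
  rw [Finset.sum_comm]
  simp_rw [Finset.sum_comm (γ := Fin J), mul_assoc, mul_left_comm (P j _)]

theorem contract3_tucker (P : Matrix (Fin K') (Fin K) ℝ) :
    contract3 P (tucker G U V W) = tucker G U V (P * W) := by
  funext i j k
  simp only [contract3, tucker, mul_apply, Finset.mul_sum]
  rw [Finset.sum_comm]
  simp_rw [Finset.sum_comm (γ := Fin K), mul_assoc, mul_left_comm (P k _)]

theorem tucker_eq_contract1 (G : Fin R₁ → Fin R₂ → Fin R₃ → ℝ) :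
    tucker G U V W = contract1 U (tucker G 1 V W) := by
  rw [contract1_tucker, Matrix.mul_one]

theorem tucker_eq_contract2 (G : Fin R₁ → Fin R₂ → Fin R₃ → ℝ) :
    tucker G U V W = contract2 V (tucker G U 1 W) := by
  rw [contract2_tucker, Matrix.mul_one]

theorem tucker_eq_contract3 (G : Fin R₁ → Fin R₂ → Fin R₃ → ℝ) :
    tucker G U V W = contract3 W (tucker G U V 1) := by
  rw [contract3_tucker, Matrix.mul_one]

section Factor

variable {R R' : ℕ}

theorem exists_eq_mul_of_contract1_eq {T : Fin R → Fin J → Fin K → ℝ}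
    {T' : Fin R' → Fin J → Fin K → ℝ} {A : Matrix (Fin I) (Fin R) ℝ}
    {A' : Matrix (Fin I) (Fin R') ℝ} (h : contract1 A T = contract1 A' T')
    (hr : (unfold1 (contract1 A T)).rank = R') : ∃ M, A' = A * M :=
  exists_eq_mul_of_mul_eq_of_rank_eq_card (B := (unfold1 T)ᵀ) (D := (unfold1 T')ᵀ)
    (congrArg (fun T => (unfold1 T)ᵀ) h) (by rw [Fintype.card_fin, ← hr, ← rank_transpose]; rfl)

theorem exists_eq_mul_of_contract2_eq {T : Fin I → Fin R → Fin K → ℝ}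
    {T' : Fin I → Fin R' → Fin K → ℝ} {A : Matrix (Fin J) (Fin R) ℝ}
    {A' : Matrix (Fin J) (Fin R') ℝ} (h : contract2 A T = contract2 A' T')
    (hr : (unfold2 (contract2 A T)).rank = R') : ∃ M, A' = A * M :=
  exists_eq_mul_of_mul_eq_of_rank_eq_card (B := (unfold2 T)ᵀ) (D := (unfold2 T')ᵀ)
    (congrArg (fun T => (unfold2 T)ᵀ) h) (by rw [Fintype.card_fin, ← hr, ← rank_transpose]; rfl)

theorem exists_eq_mul_of_contract3_eq {T : Fin I → Fin J → Fin R → ℝ}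
    {T' : Fin I → Fin J → Fin R' → ℝ} {A : Matrix (Fin K) (Fin R) ℝ}
    {A' : Matrix (Fin K) (Fin R') ℝ} (h : contract3 A T = contract3 A' T')
    (hr : (unfold3 (contract3 A T)).rank = R') : ∃ M, A' = A * M :=
  exists_eq_mul_of_mul_eq_of_rank_eq_card (B := (unfold3 T)ᵀ) (D := (unfold3 T')ᵀ)
    (congrArg (fun T => (unfold3 T)ᵀ) h) (by rw [Fintype.card_fin, ← hr, ← rank_transpose]; rfl)

end Factor

theorem exists_eq_mul_of_tucker_eq_of_rank_unfold1 (h : tucker G U V W = tucker G' U' V' W')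
    (hr : (unfold1 (tucker G U V W)).rank = R₁') : ∃ M, U' = U * M := by
  rw [tucker_eq_contract1 G, tucker_eq_contract1 G'] at h
  rw [tucker_eq_contract1 G] at hr
  exact exists_eq_mul_of_contract1_eq h hr

theorem exists_eq_mul_of_tucker_eq_of_rank_unfold2 (h : tucker G U V W = tucker G' U' V' W')
    (hr : (unfold2 (tucker G U V W)).rank = R₂') : ∃ M, V' = V * M := by
  rw [tucker_eq_contract2 G, tucker_eq_contract2 G'] at h
  rw [tucker_eq_contract2 G] at hr
  exact exists_eq_mul_of_contract2_eq h hr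

theorem exists_eq_mul_of_tucker_eq_of_rank_unfold3 (h : tucker G U V W = tucker G' U' V' W')
    (hr : (unfold3 (tucker G U V W)).rank = R₃') : ∃ M, W' = W * M := by
  rw [tucker_eq_contract3 G, tucker_eq_contract3 G'] at h
  rw [tucker_eq_contract3 G] at hr
  exact exists_eq_mul_of_contract3_eq h hr

theorem tucker_eq_of_compress12_eq {I_H J_H : ℕ} {P₁ : Matrix (Fin I_H) (Fin I) ℝ}
    {P₂ : Matrix (Fin J_H) (Fin J) ℝ} (hPU : (P₁ * U).rank = R₁) (hPV : (P₂ * V).rank = R₂)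
    {M₁ : Matrix (Fin R₁) (Fin R₁') ℝ} {M₂ : Matrix (Fin R₂) (Fin R₂') ℝ}
    (h : tucker G' (P₁ * (U * M₁)) (P₂ * (V * M₂)) W' = tucker G (P₁ * U) (P₂ * V) W) :
    tucker G' (U * M₁) (V * M₂) W' = tucker G U V W := by
  obtain ⟨L₁, hL₁⟩ := exists_mul_eq_one_of_rank_eq_card (hPU.trans (Fintype.card_fin R₁).symm)
  obtain ⟨L₂, hL₂⟩ := exists_mul_eq_one_of_rank_eq_card (hPV.trans (Fintype.card_fin R₂).symm)
  have := congrArg (fun T => contract1 (U * L₁) (contract2 (V * L₂) T)) h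
  simpa only [contract1_tucker, contract2_tucker, Matrix.mul_assoc, hL₁, hL₂, Matrix.mul_one,
    mul_mul_mul_cancel hL₁, mul_mul_mul_cancel hL₂] using this

theorem tucker_eq_of_compress3_eq {K_M : ℕ} {P : Matrix (Fin K_M) (Fin K) ℝ}
    (hPW : (P * W).rank = R₃) {M : Matrix (Fin R₃) (Fin R₃') ℝ}
    (h : tucker G' U' V' (P * (W * M)) = tucker G U V (P * W)) :
    tucker G' U' V' (W * M) = tucker G U V W := by
  obtain ⟨L, hL⟩ := exists_mul_eq_one_of_rank_eq_card (hPW.trans (Fintype.card_fin R₃).symm)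
  have := congrArg (contract3 (W * L)) h
  simpa only [contract3_tucker, Matrix.mul_assoc, hL, Matrix.mul_one, mul_mul_mul_cancel hL]
    using this

end Tucker

theorem tucker_deterministic_recovery_general
    {I J K I_H J_H K_M R₁ R₂ R₃ : ℕ}
    (G : Fin R₁ → Fin R₂ → Fin R₃ → ℝ)
    (U : Matrix (Fin I) (Fin R₁) ℝ) (V : Matrix (Fin J) (Fin R₂) ℝ)
    (W : Matrix (Fin K) (Fin R₃) ℝ)
    (P₁ : Matrix (Fin I_H) (Fin I) ℝ) (P₂ : Matrix (Fin J_H) (Fin J) ℝ)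
    (P_M : Matrix (Fin K_M) (Fin K) ℝ)
    (Y : Fin I → Fin J → Fin K → ℝ) (hY : Y = tucker G U V W)
    (hM1 : (unfold1 (contract3 P_M Y)).rank = R₁)
    (hM2 : (unfold2 (contract3 P_M Y)).rank = R₂)
    (hH3 : (unfold3 (contract1 P₁ (contract2 P₂ Y))).rank = R₃)
    (hab : ((P₁ * U).rank = R₁ ∧ (P₂ * V).rank = R₂) ∨ (P_M * W).rank = R₃) :
    ∀ Z : Fin I → Fin J → Fin K → ℝ, mlrankLE Z R₁ R₂ R₃ →
      contract3 P_M Z = contract3 P_M Y →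
      contract1 P₁ (contract2 P₂ Z) = contract1 P₁ (contract2 P₂ Y) →
      Z = Y := by
  rintro Z ⟨G', U', V', W', rfl⟩ hM hH
  subst hY
  simp only [contract1_tucker, contract2_tucker, contract3_tucker] at hM1 hM2 hH3 hM hH
  rcases hab with ⟨hPU, hPV⟩ | hPW
  · obtain ⟨M₁, rfl⟩ := exists_eq_mul_of_tucker_eq_of_rank_unfold1 hM.symm hM1
    obtain ⟨M₂, rfl⟩ := exists_eq_mul_of_tucker_eq_of_rank_unfold2 hM.symm hM2
    exact tucker_eq_of_compress12_eq hPU hPV hH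
  · obtain ⟨M, rfl⟩ := exists_eq_mul_of_tucker_eq_of_rank_unfold3 hH.symm hH3
    exact tucker_eq_of_compress3_eq hPW hM

/-- Deterministic exact recovery for the coupled Tucker model (Theorem 1, part 1). -/
theorem tucker_deterministic_recovery
    {I J K I_H J_H K_M R₁ R₂ R₃ : ℕ}
    (G : Fin R₁ → Fin R₂ → Fin R₃ → ℝ)
    (U : Matrix (Fin I) (Fin R₁) ℝ) (V : Matrix (Fin J) (Fin R₂) ℝ)
    (W : Matrix (Fin K) (Fin R₃) ℝ)
    (hU : U.rank = R₁) (hV : V.rank = R₂) (hW : W.rank = R₃)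
    (P₁ : Matrix (Fin I_H) (Fin I) ℝ) (P₂ : Matrix (Fin J_H) (Fin J) ℝ)
    (P_M : Matrix (Fin K_M) (Fin K) ℝ)
    (Y : Fin I → Fin J → Fin K → ℝ) (hY : Y = tucker G U V W)
    (hM1 : (unfold1 (contract3 P_M Y)).rank = R₁)
    (hM2 : (unfold2 (contract3 P_M Y)).rank = R₂)
    (hH3 : (unfold3 (contract1 P₁ (contract2 P₂ Y))).rank = R₃)
    (hab : ((P₁ * U).rank = R₁ ∧ (P₂ * V).rank = R₂) ∨ (P_M * W).rank = R₃) :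
    ∀ Z : Fin I → Fin J → Fin K → ℝ, mlrankLE Z R₁ R₂ R₃ →
      contract3 P_M Z = contract3 P_M Y →
      contract1 P₁ (contract2 P₂ Z) = contract1 P₁ (contract2 P₂ Y) →
      Z = Y :=
  tucker_deterministic_recovery_general G U V W P₁ P₂ P_M Y hY hM1 hM2 hH3 hab
end

section
/- Let Y be an I×J×K tensor of multilinear rank (R₁,R₂,R₃), written as Y = G ×₁ U ×₂ V ×₃ W with U,V,W of full column rank. Suppose both rank(P₁U)·rank(P₂V) < R₁R₂ and rank(P_M W) < R₃. Then there exist infinitely many tensors Ŷ of multilinear rank at most (R₁,R₂,R₃) with Ŷ ×₃ P_M = Y ×₃ P_M and Ŷ ×₁ P₁ ×₂ P₂ = Y ×₁ P₁ ×₂ P₂; moreover ‖Ŷ − Y‖_F can be made arbitrarily large among such Ŷ. -/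
open Matrix
open scoped Kronecker

lemma ker_aux {m n : ℕ} (A : Matrix (Fin m) (Fin n) ℝ) (h : A.rank < n) :
    ∃ v : Fin n → ℝ, v ≠ 0 ∧ A *ᵥ v = 0 := by
  have hrn := LinearMap.finrank_range_add_finrank_ker A.mulVecLin
  rw [Module.finrank_pi] at hrn
  simp only [Fintype.card_fin] at hrn
  have hker : 0 < Module.finrank ℝ (LinearMap.ker A.mulVecLin) := by
    have : A.rank = Module.finrank ℝ (LinearMap.range A.mulVecLin) := rfl
    omega
  have : Nontrivial (LinearMap.ker A.mulVecLin) := Module.finrank_pos_iff.mp hker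
  obtain ⟨⟨v, hv⟩, hvne⟩ := exists_ne (0 : LinearMap.ker A.mulVecLin)
  exact ⟨v, by simpa [Subtype.ext_iff] using hvne, hv⟩

lemma inj_aux {m n : ℕ} (A : Matrix (Fin m) (Fin n) ℝ) (h : A.rank = n)
    (v : Fin n → ℝ) (hv : A *ᵥ v = 0) : v = 0 := by
  have hrn := LinearMap.finrank_range_add_finrank_ker A.mulVecLin
  rw [Module.finrank_pi] at hrn
  simp only [Fintype.card_fin] at hrn
  have : A.rank = Module.finrank ℝ (LinearMap.range A.mulVecLin) := rfl
  have hker : Module.finrank ℝ (LinearMap.ker A.mulVecLin) = 0 := by omega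
  have hbot := Submodule.finrank_eq_zero.mp hker
  have hvmem : v ∈ LinearMap.ker A.mulVecLin := hv
  rw [hbot] at hvmem
  simpa using hvmem

lemma factor_aux {a b : ℕ} (f : Fin a → ℝ) (g : Fin b → ℝ) (c : ℝ) :
    ∑ i, ∑ j, f i * (g j * c) = (∑ i, f i) * ((∑ j, g j) * c) := by
  rw [Finset.sum_mul]
  refine Finset.sum_congr rfl fun i _ => ?_
  rw [Finset.sum_mul, Finset.mul_sum]

lemma expand_aux {a b c : ℕ} (F : Fin a → Fin b → ℝ) (Gc : Fin c → ℝ) :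
    (∑ p, ∑ q, F p q) * (∑ r, Gc r) = ∑ p, ∑ q, ∑ r, F p q * Gc r := by
  rw [Finset.sum_mul]
  refine Finset.sum_congr rfl fun p _ => ?_
  rw [Finset.sum_mul]
  exact Finset.sum_congr rfl fun q _ => Finset.mul_sum _ _ _

lemma quad_swap {a b c d : ℕ} (F : Fin a → Fin b → Fin c → Fin d → ℝ) :
    ∑ i, ∑ j, ∑ p, ∑ q, F i j p q = ∑ p, ∑ q, ∑ i, ∑ j, F i j p q := by
  calc ∑ i, ∑ j, ∑ p, ∑ q, F i j p q
      = ∑ i, ∑ p, ∑ j, ∑ q, F i j p q :=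
        Finset.sum_congr rfl fun i _ => Finset.sum_comm
    _ = ∑ p, ∑ i, ∑ j, ∑ q, F i j p q := Finset.sum_comm
    _ = ∑ p, ∑ i, ∑ q, ∑ j, F i j p q :=
        Finset.sum_congr rfl fun p _ => Finset.sum_congr rfl fun i _ => Finset.sum_comm
    _ = ∑ p, ∑ q, ∑ i, ∑ j, F i j p q :=
        Finset.sum_congr rfl fun p _ => Finset.sum_comm

lemma nondegen_aux {I J R₁ R₂ : ℕ} (U : Matrix (Fin I) (Fin R₁) ℝ)
    (V : Matrix (Fin J) (Fin R₂) ℝ) (hU : U.rank = R₁) (hV : V.rank = R₂)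
    (M : Matrix (Fin R₁) (Fin R₂) ℝ)
    (h : ∀ i j, ∑ p, ∑ q, U i p * V j q * M p q = 0) : M = 0 := by
  have hN : M * Vᵀ = 0 := by
    ext p j
    have hcol : U *ᵥ (fun p => (M * Vᵀ) p j) = 0 := by
      funext i
      have : ∑ p, U i p * (M * Vᵀ) p j = 0 := by
        rw [← h i j]
        simp only [Matrix.mul_apply, Matrix.transpose_apply, Finset.mul_sum]
        refine Finset.sum_congr rfl fun p _ => ?_
        exact Finset.sum_congr rfl fun q _ => by ring
      simpa [Matrix.mulVec, dotProduct] using this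
    have := inj_aux U hU _ hcol
    simpa using congrFun this p
  ext p q
  have hrow : V *ᵥ (fun q => M p q) = 0 := by
    funext j
    have h0 : (M * Vᵀ) p j = 0 := by rw [hN]; rfl
    simp only [Matrix.mul_apply, Matrix.transpose_apply] at h0
    simpa [Matrix.mulVec, dotProduct, mul_comm] using h0
  have := inj_aux V hV _ hrow
  simpa using congrFun this q

/-- Non-recoverability case (Theorem 1, part 2): infinitely many consistent tensors,
with arbitrarily large error. -/
theorem tucker_nonrecoverable
    {I J K I_H J_H K_M R₁ R₂ R₃ : ℕ}
    (G : Fin R₁ → Fin R₂ → Fin R₃ → ℝ)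
    (U : Matrix (Fin I) (Fin R₁) ℝ) (V : Matrix (Fin J) (Fin R₂) ℝ)
    (W : Matrix (Fin K) (Fin R₃) ℝ)
    (hU : U.rank = R₁) (hV : V.rank = R₂) (hW : W.rank = R₃)
    (P₁ : Matrix (Fin I_H) (Fin I) ℝ) (P₂ : Matrix (Fin J_H) (Fin J) ℝ)
    (P_M : Matrix (Fin K_M) (Fin K) ℝ)
    (Y : Fin I → Fin J → Fin K → ℝ) (hY : Y = tucker G U V W)
    (hcond1 : (P₁ * U).rank * (P₂ * V).rank < R₁ * R₂)
    (hcond2 : (P_M * W).rank < R₃) :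
    {Z : Fin I → Fin J → Fin K → ℝ | mlrankLE Z R₁ R₂ R₃ ∧
        contract3 P_M Z = contract3 P_M Y ∧
        contract1 P₁ (contract2 P₂ Z) = contract1 P₁ (contract2 P₂ Y)}.Infinite ∧
    ∀ c : ℝ, ∃ Z : Fin I → Fin J → Fin K → ℝ, mlrankLE Z R₁ R₂ R₃ ∧
      contract3 P_M Z = contract3 P_M Y ∧
      contract1 P₁ (contract2 P₂ Z) = contract1 P₁ (contract2 P₂ Y) ∧
      c < frob (fun i j k => Z i j k - Y i j k) := by

  -- positivity of ranks
  have hpos : 0 < R₁ * R₂ := Nat.lt_of_le_of_lt (Nat.zero_le _) hcond1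
  have hR1 : 0 < R₁ := Nat.pos_of_ne_zero (by rintro rfl; simp at hpos)
  have hR2 : 0 < R₂ := Nat.pos_of_ne_zero (by rintro rfl; simp at hpos)
  -- a nonzero matrix M killed by (P₁U, P₂V)
  obtain ⟨M, hMne, hAMB⟩ : ∃ M : Matrix (Fin R₁) (Fin R₂) ℝ, M ≠ 0 ∧
      ∀ i' j', ∑ p, ∑ q, (P₁ * U) i' p * ((P₂ * V) j' q * M p q) = 0 := by
    have hcase : (P₁ * U).rank < R₁ ∨ (P₂ * V).rank < R₂ := by
      by_contra h
      push_neg at h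
      exact absurd hcond1 (not_lt.mpr (Nat.mul_le_mul h.1 h.2))
    rcases hcase with hc | hc
    · obtain ⟨x, hx0, hx⟩ := ker_aux (P₁ * U) hc
      refine ⟨fun p q => if q = (⟨0, hR2⟩ : Fin R₂) then x p else 0, ?_, ?_⟩
      · obtain ⟨p, hp⟩ := Function.ne_iff.mp hx0
        intro hM
        have := congrFun (congrFun hM p) (⟨0, hR2⟩ : Fin R₂)
        simp at this
        exact hp this
      · intro i' j'
        have hxi : ∑ p, (P₁ * U) i' p * x p = 0 := by
          have := congrFun hx i'
          simpa [Matrix.mulVec, dotProduct] using this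
        calc ∑ p, ∑ q, (P₁ * U) i' p *
                ((P₂ * V) j' q * (if q = (⟨0, hR2⟩ : Fin R₂) then x p else 0))
            = ∑ p, (P₁ * U) i' p * ((P₂ * V) j' ⟨0, hR2⟩ * x p) := by
              refine Finset.sum_congr rfl fun p _ => ?_
              simp [mul_ite, Finset.sum_ite_eq']
          _ = (P₂ * V) j' ⟨0, hR2⟩ * ∑ p, (P₁ * U) i' p * x p := by
              rw [Finset.mul_sum]
              exact Finset.sum_congr rfl fun p _ => by ring
          _ = 0 := by rw [hxi, mul_zero]
    · obtain ⟨x, hx0, hx⟩ := ker_aux (P₂ * V) hc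
      refine ⟨fun p q => if p = (⟨0, hR1⟩ : Fin R₁) then x q else 0, ?_, ?_⟩
      · obtain ⟨q, hq⟩ := Function.ne_iff.mp hx0
        intro hM
        have := congrFun (congrFun hM (⟨0, hR1⟩ : Fin R₁)) q
        simp at this
        exact hq this
      · intro i' j'
        have hxj : ∑ q, (P₂ * V) j' q * x q = 0 := by
          have := congrFun hx j'
          simpa [Matrix.mulVec, dotProduct] using this
        calc ∑ p, ∑ q, (P₁ * U) i' p *
                ((P₂ * V) j' q * (if p = (⟨0, hR1⟩ : Fin R₁) then x q else 0))
            = ∑ p, ∑ q, (if p = (⟨0, hR1⟩ : Fin R₁) then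
                (P₁ * U) i' p * ((P₂ * V) j' q * x q) else 0) := by
              refine Finset.sum_congr rfl fun p _ => Finset.sum_congr rfl fun q _ => ?_
              by_cases h : p = (⟨0, hR1⟩ : Fin R₁) <;> simp [h]
          _ = ∑ q, (P₁ * U) i' ⟨0, hR1⟩ * ((P₂ * V) j' q * x q) := by
              rw [Finset.sum_comm]
              refine Finset.sum_congr rfl fun q _ => ?_
              simp [Finset.sum_ite_eq']
          _ = (P₁ * U) i' ⟨0, hR1⟩ * ∑ q, (P₂ * V) j' q * x q := by
              rw [Finset.mul_sum]
          _ = 0 := by rw [hxj, mul_zero]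
  -- a nonzero kernel vector for P_M W
  obtain ⟨w, hw0, hw⟩ := ker_aux (P_M * W) hcond2
  -- the building blocks
  set S : Fin I → Fin J → ℝ := fun i j => ∑ p, ∑ q, U i p * V j q * M p q with hSdef
  set wv : Fin K → ℝ := fun k => ∑ r, W k r * w r with hwvdef
  -- nonvanishing
  obtain ⟨i₀, j₀, hS0⟩ : ∃ i j, S i j ≠ 0 := by
    by_contra h
    push_neg at h
    exact hMne (nondegen_aux U V hU hV M (by simpa [hSdef] using h))
  obtain ⟨k₀, hwv0⟩ : ∃ k, wv k ≠ 0 := by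
    have hne : wv ≠ 0 := by
      intro h
      refine hw0 (inj_aux W hW w ?_)
      funext k
      have := congrFun h k
      simpa [hwvdef, Matrix.mulVec, dotProduct] using this
    exact Function.ne_iff.mp hne
  -- the perturbation family
  set Zf : ℝ → (Fin I → Fin J → Fin K → ℝ) :=
    fun t => fun i j k => Y i j k + t * (S i j * wv k) with hZf
  -- auxiliary vanishing sums
  have hPMw : ∀ k', ∑ l, P_M k' l * wv l = 0 := by
    intro k'
    have h0 : ((P_M * W) *ᵥ w) k' = 0 := by rw [hw]; rfl
    calc ∑ l, P_M k' l * wv l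
        = ∑ l, ∑ r, P_M k' l * (W l r * w r) := by
          simp only [hwvdef, Finset.mul_sum]
      _ = ∑ r, ∑ l, P_M k' l * (W l r * w r) := Finset.sum_comm
      _ = ∑ r, (∑ l, P_M k' l * W l r) * w r := by
          refine Finset.sum_congr rfl fun r _ => ?_
          rw [Finset.sum_mul]
          exact Finset.sum_congr rfl fun l _ => by ring
      _ = ((P_M * W) *ᵥ w) k' := by
          simp [Matrix.mulVec, dotProduct, Matrix.mul_apply]
      _ = 0 := h0
  have htot : ∀ i' j', ∑ i, P₁ i' i * (∑ j, P₂ j' j * S i j) = 0 := by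
    intro i' j'
    calc ∑ i, P₁ i' i * (∑ j, P₂ j' j * S i j)
        = ∑ i, ∑ j, ∑ p, ∑ q, P₁ i' i * (P₂ j' j * (U i p * V j q * M p q)) := by
          simp only [hSdef, Finset.mul_sum]
      _ = ∑ p, ∑ q, ∑ i, ∑ j, P₁ i' i * (P₂ j' j * (U i p * V j q * M p q)) :=
          quad_swap _
      _ = ∑ p, ∑ q, ∑ i, ∑ j, (P₁ i' i * U i p) * ((P₂ j' j * V j q) * M p q) := by
          refine Finset.sum_congr rfl fun p _ => Finset.sum_congr rfl fun q _ =>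
            Finset.sum_congr rfl fun i _ => Finset.sum_congr rfl fun j _ => by ring
      _ = ∑ p, ∑ q, (∑ i, P₁ i' i * U i p) * ((∑ j, P₂ j' j * V j q) * M p q) := by
          exact Finset.sum_congr rfl fun p _ => Finset.sum_congr rfl fun q _ =>
            factor_aux _ _ _
      _ = ∑ p, ∑ q, (P₁ * U) i' p * ((P₂ * V) j' q * M p q) := by
          simp [Matrix.mul_apply]
      _ = 0 := hAMB i' j'
  -- membership of every Zf t in the constraint set
  have hmem : ∀ t : ℝ, mlrankLE (Zf t) R₁ R₂ R₃ ∧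
      contract3 P_M (Zf t) = contract3 P_M Y ∧
      contract1 P₁ (contract2 P₂ (Zf t)) = contract1 P₁ (contract2 P₂ Y) := by
    intro t
    refine ⟨⟨fun p q r => G p q r + t * (M p q * w r), U, V, W, ?_⟩, ?_, ?_⟩
    · funext i j k
      calc Zf t i j k
          = (∑ p, ∑ q, ∑ r, G p q r * U i p * V j q * W k r) +
            ∑ p, ∑ q, ∑ r, t * (M p q * w r) * U i p * V j q * W k r := by
            simp only [hZf, hY, tucker, hSdef, hwvdef]
            congr 1
            rw [expand_aux, Finset.mul_sum]
            refine Finset.sum_congr rfl fun p _ => ?_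
            rw [Finset.mul_sum]
            refine Finset.sum_congr rfl fun q _ => ?_
            rw [Finset.mul_sum]
            exact Finset.sum_congr rfl fun r _ => by ring
        _ = ∑ p, ∑ q, ∑ r, (G p q r + t * (M p q * w r)) * U i p * V j q * W k r := by
            simp only [add_mul, Finset.sum_add_distrib]
        _ = tucker (fun p q r => G p q r + t * (M p q * w r)) U V W i j k := rfl
    · funext i j k
      simp only [contract3, hZf]
      calc ∑ l, P_M k l * (Y i j l + t * (S i j * wv l))
          = ∑ l, (P_M k l * Y i j l + (t * S i j) * (P_M k l * wv l)) :=
            Finset.sum_congr rfl fun l _ => by ring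
        _ = ∑ l, P_M k l * Y i j l + (t * S i j) * ∑ l, P_M k l * wv l := by
            rw [Finset.sum_add_distrib]
            congr 1
            exact (Finset.mul_sum _ _ _).symm
        _ = ∑ l, P_M k l * Y i j l := by rw [hPMw k, mul_zero, add_zero]
    · funext i' j' k
      simp only [contract1, contract2, hZf]
      have hinner : ∀ i, ∑ j, P₂ j' j * (Y i j k + t * (S i j * wv k)) =
          ∑ j, P₂ j' j * Y i j k + (t * wv k) * ∑ j, P₂ j' j * S i j := by
        intro i
        rw [Finset.mul_sum, ← Finset.sum_add_distrib]
        exact Finset.sum_congr rfl fun j _ => by ring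
      calc ∑ i, P₁ i' i * ∑ j, P₂ j' j * (Y i j k + t * (S i j * wv k))
          = ∑ i, (P₁ i' i * ∑ j, P₂ j' j * Y i j k +
              (t * wv k) * (P₁ i' i * ∑ j, P₂ j' j * S i j)) := by
            refine Finset.sum_congr rfl fun i _ => ?_
            rw [hinner i]; ring
        _ = ∑ i, P₁ i' i * ∑ j, P₂ j' j * Y i j k +
              (t * wv k) * ∑ i, P₁ i' i * ∑ j, P₂ j' j * S i j := by
            rw [Finset.sum_add_distrib]
            congr 1
            exact (Finset.mul_sum _ _ _).symm
        _ = ∑ i, P₁ i' i * ∑ j, P₂ j' j * Y i j k := by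
            rw [htot i' j', mul_zero, add_zero]
  -- the nonzero direction value
  have hD0 : S i₀ j₀ * wv k₀ ≠ 0 := mul_ne_zero hS0 hwv0
  constructor
  · refine Set.infinite_of_injective_forall_mem (f := Zf) ?_ ?_
    · intro s t hst
      have := congrFun (congrFun (congrFun hst i₀) j₀) k₀
      simp only [hZf] at this
      have h2 : s * (S i₀ j₀ * wv k₀) = t * (S i₀ j₀ * wv k₀) := by linarith
      exact mul_right_cancel₀ hD0 h2
    · intro t
      exact hmem t
  · intro c
    -- total energy of the direction
    set T : ℝ := ∑ i, ∑ j, ∑ k, (S i j * wv k) ^ 2 with hT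
    have hTpos : 0 < T := by
      have h1 : (S i₀ j₀ * wv k₀) ^ 2 ≤ ∑ k, (S i₀ j₀ * wv k) ^ 2 := by
        apply Finset.single_le_sum (f := fun k => (S i₀ j₀ * wv k) ^ 2)
          (fun k _ => sq_nonneg _) (Finset.mem_univ k₀)
      have h2 : ∑ k, (S i₀ j₀ * wv k) ^ 2 ≤ ∑ j, ∑ k, (S i₀ j * wv k) ^ 2 := by
        apply Finset.single_le_sum (f := fun j => ∑ k, (S i₀ j * wv k) ^ 2)
          (fun j _ => Finset.sum_nonneg fun k _ => sq_nonneg _) (Finset.mem_univ j₀)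
      have h3 : ∑ j, ∑ k, (S i₀ j * wv k) ^ 2 ≤ T := by
        rw [hT]
        apply Finset.single_le_sum (f := fun i => ∑ j, ∑ k, (S i j * wv k) ^ 2)
          (fun i _ => Finset.sum_nonneg fun j _ => Finset.sum_nonneg fun k _ => sq_nonneg _)
          (Finset.mem_univ i₀)
      have h0 : 0 < (S i₀ j₀ * wv k₀) ^ 2 := by positivity
      linarith
    have hsT : 0 < Real.sqrt T := Real.sqrt_pos.mpr hTpos
    set t : ℝ := (|c| + 1) / Real.sqrt T with ht
    refine ⟨Zf t, (hmem t).1, (hmem t).2.1, (hmem t).2.2, ?_⟩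
    have hdiff : (fun i j k => Zf t i j k - Y i j k) =
        fun i j k => t * (S i j * wv k) := by
      funext i j k
      simp [hZf]
    rw [hdiff]
    have hfr : frob (fun i j k => t * (S i j * wv k)) = |t| * Real.sqrt T := by
      have hsum : ∑ i, ∑ j, ∑ k, (t * (S i j * wv k)) ^ 2 = t ^ 2 * T := by
        rw [hT]
        simp only [mul_pow, Finset.mul_sum]
      rw [frob, hsum, Real.sqrt_mul (sq_nonneg t), Real.sqrt_sq_eq_abs]
    rw [hfr]
    have htpos : 0 < t := by positivity
    rw [abs_of_pos htpos, ht, div_mul_cancel₀ _ (ne_of_gt hsT)]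
    calc c ≤ |c| := le_abs_self c
      _ < |c| + 1 := by linarith
end

section
/- With X as above (Û, V̂, Ŵ orthonormal columns, λ > 0), XᵀX is invertible if and only if rank(P₁Û)·rank(P₂V̂) = R₁R₂ or rank(P_MŴ) = R₃; equivalently, XᵀX is singular iff rank(P₁Û)rank(P₂V̂) < R₁R₂ and rank(P_MŴ) < R₃. -/
open Matrix
open scoped Kronecker

lemma sum_elim_eq_zero {α β γ : Type*} [Zero γ] {f : α → γ} {g : β → γ} :
    Sum.elim f g = 0 ↔ f = 0 ∧ g = 0 := by
  constructor
  · intro h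
    exact ⟨funext fun i => congrFun h (Sum.inl i), funext fun i => congrFun h (Sum.inr i)⟩
  · rintro ⟨h1, h2⟩
    subst h1; subst h2
    funext s
    cases s <;> rfl

lemma kron_orth_left {k r m c : Type*} [Fintype k] [Fintype r] [Fintype m] [Fintype c]
    [DecidableEq r] [DecidableEq m]
    (W : Matrix k r ℝ) (hW : Wᵀ * W = 1) (B : Matrix m c ℝ) (v : r × c → ℝ) :
    (W ⊗ₖ B) *ᵥ v = 0 ↔ (((1 : Matrix r r ℝ)) ⊗ₖ B) *ᵥ v = 0 := by
  constructor
  · intro h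
    have e : ((Wᵀ ⊗ₖ (1 : Matrix m m ℝ)) * (W ⊗ₖ B)) = (1 : Matrix r r ℝ) ⊗ₖ B := by
      rw [← Matrix.mul_kronecker_mul, hW, Matrix.one_mul]
    rw [← e, ← Matrix.mulVec_mulVec, h, Matrix.mulVec_zero]
  · intro h
    have e : ((W ⊗ₖ (1 : Matrix m m ℝ)) * ((1 : Matrix r r ℝ) ⊗ₖ B)) = W ⊗ₖ B := by
      rw [← Matrix.mul_kronecker_mul, Matrix.mul_one, Matrix.one_mul]
    rw [← e, ← Matrix.mulVec_mulVec, h, Matrix.mulVec_zero]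

lemma kron_orth_right {n a m c : Type*} [Fintype n] [Fintype a] [Fintype m] [Fintype c]
    [DecidableEq n] [DecidableEq c]
    (C : Matrix n a ℝ) (B : Matrix m c ℝ) (hB : Bᵀ * B = 1) (v : a × c → ℝ) :
    (C ⊗ₖ B) *ᵥ v = 0 ↔ (C ⊗ₖ (1 : Matrix c c ℝ)) *ᵥ v = 0 := by
  constructor
  · intro h
    have e : (((1 : Matrix n n ℝ) ⊗ₖ Bᵀ) * (C ⊗ₖ B)) = C ⊗ₖ (1 : Matrix c c ℝ) := by
      rw [← Matrix.mul_kronecker_mul, Matrix.one_mul, hB]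
    rw [← e, ← Matrix.mulVec_mulVec, h, Matrix.mulVec_zero]
  · intro h
    have e : (((1 : Matrix n n ℝ) ⊗ₖ B) * (C ⊗ₖ (1 : Matrix c c ℝ))) = C ⊗ₖ B := by
      rw [← Matrix.mul_kronecker_mul, Matrix.one_mul, Matrix.mul_one]
    rw [← e, ← Matrix.mulVec_mulVec, h, Matrix.mulVec_zero]

lemma nat_rank_arith {a b x y : ℕ} (ha : a ≤ x) (hb : b ≤ y) :
    ((b < y ∧ 0 < x) ∨ (a < x ∧ 0 < y)) ↔ a * b < x * y := by
  constructor
  · rintro (⟨h1, h2⟩ | ⟨h1, h2⟩)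
    · calc a * b ≤ x * b := Nat.mul_le_mul_right _ ha
        _ < x * y := Nat.mul_lt_mul_of_pos_left h1 h2
    · calc a * b ≤ a * y := Nat.mul_le_mul_left _ hb
        _ < x * y := Nat.mul_lt_mul_of_pos_right h1 h2
  · intro h
    have hx : 0 < x := by
      rcases Nat.eq_zero_or_pos x with h0 | h0
      · subst h0; simp at h
      · exact h0
    have hy : 0 < y := by
      rcases Nat.eq_zero_or_pos y with h0 | h0
      · subst h0; simp at h
      · exact h0
    have hor : a < x ∨ b < y := by
      by_contra hc
      push_neg at hc
      have h1 : a = x := le_antisymm ha hc.1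
      have h2 : b = y := le_antisymm hb hc.2
      rw [h1, h2] at h
      exact lt_irrefl _ h
    rcases hor with h' | h'
    · exact Or.inr ⟨h', hy⟩
    · exact Or.inl ⟨h', hx⟩

lemma kron_mulVec {m n p q : Type*} [Fintype n] [Fintype q]
    (A : Matrix m n ℝ) (B : Matrix p q ℝ) (v : n × q → ℝ) (i : m × p) :
    ((A ⊗ₖ B) *ᵥ v) i = ∑ k, ∑ l, A i.1 k * B i.2 l * v (k, l) := by
  simp [Matrix.mulVec, dotProduct, Fintype.sum_prod_type, kroneckerMap_apply]

lemma tmul_ker {m n : Type*} [Fintype m] [Fintype n] (M : Matrix m n ℝ) (v : n → ℝ) :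
    (Mᵀ * M) *ᵥ v = 0 ↔ M *ᵥ v = 0 := by
  constructor
  · intro h
    have h2 : (M *ᵥ v) ⬝ᵥ (M *ᵥ v) = 0 := by
      have e : v ⬝ᵥ ((Mᵀ * M) *ᵥ v) = (M *ᵥ v) ⬝ᵥ (M *ᵥ v) := by
        rw [← Matrix.mulVec_mulVec, Matrix.dotProduct_mulVec, Matrix.vecMul_transpose]
      rw [← e, h, dotProduct_zero]
    exact (dotProduct_self_eq_zero).mp h2
  · intro h
    rw [← Matrix.mulVec_mulVec, h, Matrix.mulVec_zero]

lemma rank_lt_iff_exists {m : Type*} [Fintype m] {R : ℕ} (M : Matrix m (Fin R) ℝ) :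
    M.rank < R ↔ ∃ y ≠ 0, M *ᵥ y = 0 := by
  have hrn := LinearMap.finrank_range_add_finrank_ker M.mulVecLin
  rw [Module.finrank_pi ℝ] at hrn
  simp only [Fintype.card_fin] at hrn
  rw [Matrix.rank]
  constructor
  · intro h
    have hk : Module.finrank ℝ (LinearMap.ker M.mulVecLin) ≠ 0 := by omega
    have : LinearMap.ker M.mulVecLin ≠ ⊥ := by
      intro hb
      rw [hb, finrank_bot] at hk
      exact hk rfl
    obtain ⟨y, hy, hy0⟩ := Submodule.ne_bot_iff _ |>.mp this
    exact ⟨y, hy0, hy⟩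
  · rintro ⟨y, hy0, hy⟩
    have : LinearMap.ker M.mulVecLin ≠ ⊥ :=
      Submodule.ne_bot_iff _ |>.mpr ⟨y, hy, hy0⟩
    have hk : Module.finrank ℝ (LinearMap.ker M.mulVecLin) ≠ 0 := by
      intro h0
      exact this (Submodule.finrank_eq_zero.mp h0)
    omega

lemma kron_hasKer {m p α β : Type*} [Fintype m] [Fintype p] [Fintype α] [Fintype β]
    [DecidableEq m] [DecidableEq α] [DecidableEq β]
    (A : Matrix m α ℝ) (B : Matrix p β ℝ) :
    (∃ y ≠ 0, (A ⊗ₖ B) *ᵥ y = 0) ↔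
      ((∃ a ≠ 0, A *ᵥ a = 0) ∧ Nonempty β) ∨ ((∃ b ≠ 0, B *ᵥ b = 0) ∧ Nonempty α) := by
  constructor
  · rintro ⟨y, hy0, hy⟩
    obtain ⟨⟨q0, p0⟩, hqp⟩ := Function.ne_iff.mp hy0
    simp only [Pi.zero_apply] at hqp
    by_cases hB : ∃ b ≠ 0, B *ᵥ b = 0
    · exact Or.inr ⟨hB, ⟨q0⟩⟩
    · refine Or.inl ⟨⟨fun q => y (q, p0), ?_, ?_⟩, ⟨p0⟩⟩
      · intro h0
        exact hqp (congrFun h0 q0)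
      · -- show A kills the column
        have hkey : (A ⊗ₖ (Bᵀ * B)) *ᵥ y = 0 := by
          have : (((1 : Matrix m m ℝ) ⊗ₖ Bᵀ) * (A ⊗ₖ B)) = A ⊗ₖ (Bᵀ * B) := by
            rw [← Matrix.mul_kronecker_mul, Matrix.one_mul]
          rw [← this, ← Matrix.mulVec_mulVec, hy, Matrix.mulVec_zero]
        have hw : ∀ j : m, (fun pp => ∑ q, A j q * y (q, pp)) = (0 : β → ℝ) := by
          intro j
          have hBw : (Bᵀ * B) *ᵥ (fun pp => ∑ q, A j q * y (q, pp)) = 0 := by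
            funext p'
            have := congrFun hkey (j, p')
            rw [kron_mulVec] at this
            simp only [Pi.zero_apply] at this ⊢
            rw [Matrix.mulVec]
            simp only [dotProduct]
            rw [← this]
            rw [Finset.sum_comm]
            congr 1
            ext pp
            rw [Finset.mul_sum]
            congr 1
            ext q
            ring
          have hB2 := (tmul_ker B _).mp hBw
          by_contra hne
          exact hB ⟨_, hne, hB2⟩
        funext j
        have := congrFun (hw j) p0
        simpa [Matrix.mulVec, dotProduct] using this
  · rintro (⟨⟨a, ha0, ha⟩, ⟨p0⟩⟩ | ⟨⟨b, hb0, hb⟩, ⟨q0⟩⟩)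
    · refine ⟨fun qp => a qp.1 * (if qp.2 = p0 then 1 else 0), ?_, ?_⟩
      · obtain ⟨q0, hq0⟩ := Function.ne_iff.mp ha0
        intro h0
        have := congrFun h0 (q0, p0)
        simp at this
        exact hq0 this
      · funext ji
        rw [kron_mulVec]
        have : ∀ q, ∑ pp, A ji.1 q * B ji.2 pp * (a q * if pp = p0 then (1:ℝ) else 0)
            = (A ji.1 q * a q) * B ji.2 p0 := by
          intro q
          rw [Finset.sum_eq_single p0]
          · simp; ring
          · intro pp _ hne; simp [hne]
          · simp
        simp only [this]
        rw [← Finset.sum_mul]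
        have : ∑ q, A ji.1 q * a q = (A *ᵥ a) ji.1 := by
          simp [Matrix.mulVec, dotProduct]
        rw [this, ha]
        simp
    · refine ⟨fun qp => (if qp.1 = q0 then 1 else 0) * b qp.2, ?_, ?_⟩
      · obtain ⟨p1, hp1⟩ := Function.ne_iff.mp hb0
        intro h0
        have := congrFun h0 (q0, p1)
        simp at this
        exact hp1 this
      · funext ji
        rw [kron_mulVec]
        have h1 : ∀ q, ∑ pp, A ji.1 q * B ji.2 pp * ((if q = q0 then (1:ℝ) else 0) * b pp)
            = (if q = q0 then (1:ℝ) else 0) * (A ji.1 q * ∑ pp, B ji.2 pp * b pp) := by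
          intro q
          rw [Finset.mul_sum, Finset.mul_sum]
          congr 1; ext pp; ring
        simp only [h1]
        rw [Finset.sum_eq_single q0]
        · have : ∑ pp, B ji.2 pp * b pp = (B *ᵥ b) ji.2 := by
            simp [Matrix.mulVec, dotProduct]
          rw [this, hb]
          simp
        · intro q _ hne; simp [hne]
        · simp

lemma split_ker {m n α β : Type*} [Fintype m] [Fintype n] [Fintype α] [Fintype β]
    [DecidableEq α] [DecidableEq β]
    (B : Matrix m β ℝ) (C : Matrix n α ℝ) :
    (∃ v ≠ 0, ((1 : Matrix α α ℝ) ⊗ₖ B) *ᵥ v = 0 ∧ (C ⊗ₖ (1 : Matrix β β ℝ)) *ᵥ v = 0) ↔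
      (∃ y ≠ 0, B *ᵥ y = 0) ∧ (∃ z ≠ 0, C *ᵥ z = 0) := by
  constructor
  · rintro ⟨v, hv0, h1, h2⟩
    obtain ⟨⟨r0, c0⟩, hrc⟩ := Function.ne_iff.mp hv0
    simp only [Pi.zero_apply] at hrc
    constructor
    · refine ⟨fun c => v (r0, c), fun h0 => hrc (congrFun h0 c0), ?_⟩
      funext i
      have := congrFun h1 (r0, i)
      rw [kron_mulVec] at this
      simp only [Pi.zero_apply] at this
      rw [Finset.sum_eq_single r0] at this
      · simp only [Matrix.one_apply_eq, one_mul] at this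
        simpa [Matrix.mulVec, dotProduct] using this
      · intro q _ hne
        simp [Matrix.one_apply, (Ne.symm hne)]
      · simp
    · refine ⟨fun r => v (r, c0), fun h0 => hrc (congrFun h0 r0), ?_⟩
      funext j
      have := congrFun h2 (j, c0)
      rw [kron_mulVec] at this
      simp only [Pi.zero_apply] at this
      have e : ∀ q, ∑ pp, C j q * (1 : Matrix β β ℝ) c0 pp * v (q, pp) = C j q * v (q, c0) := by
        intro q
        rw [Finset.sum_eq_single c0]
        · simp
        · intro pp _ hne
          simp [Matrix.one_apply, (Ne.symm hne)]
        · simp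
      rw [Finset.sum_congr rfl (fun q _ => e q)] at this
      simpa [Matrix.mulVec, dotProduct] using this
  · rintro ⟨⟨y, hy0, hy⟩, ⟨z, hz0, hz⟩⟩
    obtain ⟨c1, hc1⟩ := Function.ne_iff.mp hy0
    obtain ⟨r1, hr1⟩ := Function.ne_iff.mp hz0
    refine ⟨fun p => z p.1 * y p.2, ?_, ?_, ?_⟩
    · intro h0
      have := congrFun h0 (r1, c1)
      simp only [Pi.zero_apply] at this
      rcases mul_eq_zero.mp this with h | h
      · exact hr1 h
      · exact hc1 h
    · funext ri
      rw [kron_mulVec]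
      simp only [Pi.zero_apply]
      rw [Finset.sum_eq_single ri.1]
      · simp only [Matrix.one_apply_eq, one_mul]
        have : ∀ c, B ri.2 c * (z ri.1 * y c) = z ri.1 * (B ri.2 c * y c) := by intro c; ring
        rw [Finset.sum_congr rfl (fun c _ => this c), ← Finset.mul_sum]
        have : ∑ c, B ri.2 c * y c = (B *ᵥ y) ri.2 := by
          simp [Matrix.mulVec, dotProduct]
        rw [this, hy]
        simp
      · intro q _ hne
        simp [Matrix.one_apply, (Ne.symm hne)]
      · simp
    · funext jc
      rw [kron_mulVec]
      simp only [Pi.zero_apply]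
      have e : ∀ q, ∑ pp, C jc.1 q * (1 : Matrix β β ℝ) jc.2 pp * (z q * y pp)
          = C jc.1 q * z q * y jc.2 := by
        intro q
        rw [Finset.sum_eq_single jc.2]
        · simp [mul_assoc]
        · intro pp _ hne
          simp [Matrix.one_apply, (Ne.symm hne)]
        · simp
      rw [Finset.sum_congr rfl (fun q _ => e q)]
      have : ∀ q, C jc.1 q * z q * y jc.2 = (C jc.1 q * z q) * y jc.2 := fun q => rfl
      rw [← Finset.sum_mul]
      have : ∑ q, C jc.1 q * z q = (C *ᵥ z) jc.1 := by
        simp [Matrix.mulVec, dotProduct]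
      rw [this, hz]
      simp


/-- Invertibility of the SCOTT normal-equation matrix. -/
theorem scott_normal_equations_invertible_iff
    {I J K I_H J_H K_M R₁ R₂ R₃ : ℕ}
    (Uh : Matrix (Fin I) (Fin R₁) ℝ) (Vh : Matrix (Fin J) (Fin R₂) ℝ)
    (Wh : Matrix (Fin K) (Fin R₃) ℝ)
    (hU : Uhᵀ * Uh = 1) (hV : Vhᵀ * Vh = 1) (hW : Whᵀ * Wh = 1)
    (P₁ : Matrix (Fin I_H) (Fin I) ℝ) (P₂ : Matrix (Fin J_H) (Fin J) ℝ)
    (P_M : Matrix (Fin K_M) (Fin K) ℝ) (lam : ℝ) (hlam : 0 < lam)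
    (X : Matrix ((Fin K × (Fin J_H × Fin I_H)) ⊕ (Fin K_M × (Fin J × Fin I)))
      (Fin R₃ × (Fin R₂ × Fin R₁)) ℝ)
    (hX : X = Matrix.fromRows (Wh ⊗ₖ ((P₂ * Vh) ⊗ₖ (P₁ * Uh)))
      (Real.sqrt lam • ((P_M * Wh) ⊗ₖ (Vh ⊗ₖ Uh)))) :
    (IsUnit (Xᵀ * X) ↔ (P₁ * Uh).rank * (P₂ * Vh).rank = R₁ * R₂ ∨ (P_M * Wh).rank = R₃) ∧
    (¬ IsUnit (Xᵀ * X) ↔ (P₁ * Uh).rank * (P₂ * Vh).rank < R₁ * R₂ ∧ (P_M * Wh).rank < R₃) := by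
  have hbU : (P₁ * Uh).rank ≤ R₁ := Matrix.rank_le_width _
  have hbV : (P₂ * Vh).rank ≤ R₂ := Matrix.rank_le_width _
  have hbW : (P_M * Wh).rank ≤ R₃ := Matrix.rank_le_width _
  have hVU : (Vh ⊗ₖ Uh)ᵀ * (Vh ⊗ₖ Uh) = 1 := by
    rw [← Matrix.kroneckerMap_transpose, ← Matrix.mul_kronecker_mul, hV, hU,
      Matrix.one_kronecker_one]
  have hsl : Real.sqrt lam ≠ 0 := ne_of_gt (Real.sqrt_pos.mpr hlam)
  have hker : ∀ v : Fin R₃ × (Fin R₂ × Fin R₁) → ℝ,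
      (X *ᵥ v = 0 ↔
        (((1 : Matrix (Fin R₃) (Fin R₃) ℝ)) ⊗ₖ ((P₂ * Vh) ⊗ₖ (P₁ * Uh))) *ᵥ v = 0 ∧
        ((P_M * Wh) ⊗ₖ (1 : Matrix (Fin R₂ × Fin R₁) (Fin R₂ × Fin R₁) ℝ)) *ᵥ v = 0) := by
    intro v
    rw [hX, Matrix.fromRows_mulVec, sum_elim_eq_zero]
    apply and_congr
    · exact kron_orth_left Wh hW _ v
    · rw [Matrix.smul_mulVec, smul_eq_zero, or_iff_right hsl]
      exact kron_orth_right _ _ hVU v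
  have hsing : ¬ IsUnit (Xᵀ * X) ↔
      ((P₁ * Uh).rank * (P₂ * Vh).rank < R₁ * R₂ ∧ (P_M * Wh).rank < R₃) := by
    rw [Matrix.isUnit_iff_isUnit_det, isUnit_iff_ne_zero, not_not,
        ← Matrix.exists_mulVec_eq_zero_iff]
    have e1 : (∃ v, v ≠ 0 ∧ (Xᵀ * X) *ᵥ v = 0) ↔ (∃ v, v ≠ 0 ∧ X *ᵥ v = 0) :=
      exists_congr fun v => and_congr_right fun _ => tmul_ker X v
    have e2 : (∃ v, v ≠ 0 ∧ X *ᵥ v = 0) ↔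
        (∃ y ≠ 0, ((P₂ * Vh) ⊗ₖ (P₁ * Uh)) *ᵥ y = 0) ∧ (∃ z ≠ 0, (P_M * Wh) *ᵥ z = 0) := by
      rw [show (∃ v, v ≠ 0 ∧ X *ᵥ v = 0) ↔
          (∃ v, v ≠ 0 ∧
            ((((1 : Matrix (Fin R₃) (Fin R₃) ℝ)) ⊗ₖ ((P₂ * Vh) ⊗ₖ (P₁ * Uh))) *ᵥ v = 0 ∧
            ((P_M * Wh) ⊗ₖ (1 : Matrix (Fin R₂ × Fin R₁) (Fin R₂ × Fin R₁) ℝ)) *ᵥ v = 0))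
          from exists_congr fun v => and_congr_right fun _ => hker v]
      exact split_ker _ _
    rw [e1, e2, kron_hasKer, ← rank_lt_iff_exists, ← rank_lt_iff_exists, ← rank_lt_iff_exists,
      ← Fin.pos_iff_nonempty, ← Fin.pos_iff_nonempty]
    exact and_congr (nat_rank_arith hbU hbV) Iff.rfl
  refine ⟨?_, hsing⟩
  constructor
  · intro h
    by_contra hc
    push_neg at hc
    obtain ⟨h1, h2⟩ := hc
    exact (hsing.mpr ⟨lt_of_le_of_ne (Nat.mul_le_mul hbU hbV) h1,
      lt_of_le_of_ne hbW h2⟩) h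
  · intro h
    by_contra hnu
    obtain ⟨h1, h2⟩ := hsing.mp hnu
    rcases h with h | h
    · omega
    · omega
end

section
/- Let Y = ⟦A, B, C⟧ be a third-order CP decomposition of rank F with rank(A) = rank(P₁A) = rank(B) = rank(P₂B) = F, F ≤ min(I_H, J_H), and assume P_M C ∈ ℝ^{K_M×F} has no zero columns. Then rank of the first unfolding of Y_M = Y ×₃ P_M equals F, rank of the second unfolding of Y_M equals F. -/
open Matrix
open scoped Kronecker

section Aux

open Matrix

/-- A matrix with full column rank has injective `mulVecLin`. -/
lemma inj_of_rank_eq {m F : ℕ} (M : Matrix (Fin m) (Fin F) ℝ) (h : M.rank = F) :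
    Function.Injective M.mulVecLin := by
  rw [← LinearMap.ker_eq_bot]
  have h2 := LinearMap.finrank_range_add_finrank_ker M.mulVecLin
  rw [Matrix.rank] at h
  rw [h] at h2
  have hd : Module.finrank ℝ (Fin F → ℝ) = F := by simp
  rw [hd] at h2
  have : Module.finrank ℝ (LinearMap.ker M.mulVecLin) = 0 := by omega
  exact Submodule.finrank_eq_zero.mp this

lemma rank_mul_of_inj {m : Type*} [Fintype m] {F n : ℕ} (K : Matrix m (Fin F) ℝ)
    (X : Matrix (Fin F) (Fin n) ℝ) (h : Function.Injective K.mulVecLin) :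
    (K * X).rank = X.rank := by
  rw [Matrix.rank, Matrix.rank, Matrix.mulVecLin_mul, LinearMap.range_comp]
  exact (Submodule.equivMapOfInjective _ h _).symm.finrank_eq

/-- Key fact: Khatri–Rao of a no-zero-columns matrix with a full-column-rank matrix
has full column rank. -/
lemma khatriRao_inj {n m F : ℕ} (N : Matrix (Fin n) (Fin F) ℝ) (M : Matrix (Fin m) (Fin F) ℝ)
    (hM : M.rank = F) (hN : ∀ r : Fin F, ∃ k : Fin n, N k r ≠ 0) :
    Function.Injective (khatriRao N M).mulVecLin := by
  have hMi := inj_of_rank_eq M hM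
  rw [← LinearMap.ker_eq_bot, LinearMap.ker_eq_bot'] at hMi ⊢
  intro v hv
  simp only [Matrix.mulVecLin_apply] at hv
  have hz : ∀ p₁ : Fin n, ∀ r : Fin F, N p₁ r * v r = 0 := by
    intro p₁
    have : M.mulVec (fun r => N p₁ r * v r) = 0 := by
      funext p₂
      have := congrFun hv (p₁, p₂)
      have h2 : ∑ x : Fin F, N p₁ x * (M p₂ x * v x) = 0 := by
        simpa [Matrix.mulVec, dotProduct, khatriRao, mul_assoc] using this
      simpa [Matrix.mulVec, dotProduct, mul_left_comm] using h2
    have := hMi _ (by simpa [Matrix.mulVecLin_apply] using this)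
    exact fun r => congrFun this r
  funext r
  obtain ⟨k, hk⟩ := hN r
  have := hz k r
  rcases mul_eq_zero.mp this with h | h
  · exact absurd h hk
  · exact h

lemma unfold1_eq {I J K K_M F : ℕ}
    (A : Matrix (Fin I) (Fin F) ℝ) (B : Matrix (Fin J) (Fin F) ℝ)
    (C : Matrix (Fin K) (Fin F) ℝ) (P_M : Matrix (Fin K_M) (Fin K) ℝ) :
    unfold1 (contract3 P_M (cp A B C)) = khatriRao (P_M * C) B * Aᵀ := by
  funext p i
  simp only [unfold1, contract3, cp, khatriRao, Matrix.mul_apply, Matrix.transpose_apply,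
    Finset.mul_sum, Finset.sum_mul]
  rw [Finset.sum_comm]
  exact Finset.sum_congr rfl fun r _ => Finset.sum_congr rfl fun l _ => by ring

lemma unfold2_eq {I J K K_M F : ℕ}
    (A : Matrix (Fin I) (Fin F) ℝ) (B : Matrix (Fin J) (Fin F) ℝ)
    (C : Matrix (Fin K) (Fin F) ℝ) (P_M : Matrix (Fin K_M) (Fin K) ℝ) :
    unfold2 (contract3 P_M (cp A B C)) = khatriRao (P_M * C) A * Bᵀ := by
  funext p j
  simp only [unfold2, contract3, cp, khatriRao, Matrix.mul_apply, Matrix.transpose_apply,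
    Finset.mul_sum, Finset.sum_mul]
  rw [Finset.sum_comm]
  exact Finset.sum_congr rfl fun r _ => Finset.sum_congr rfl fun l _ => by ring

end Aux

/-- Under partial uniqueness conditions, the first two unfoldings of the degraded MSI
have rank `F`. -/
theorem cp_partial_uniqueness_ranks
    {I J K I_H J_H K_M F : ℕ}
    (A : Matrix (Fin I) (Fin F) ℝ) (B : Matrix (Fin J) (Fin F) ℝ)
    (C : Matrix (Fin K) (Fin F) ℝ)
    (P₁ : Matrix (Fin I_H) (Fin I) ℝ) (P₂ : Matrix (Fin J_H) (Fin J) ℝ)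
    (P_M : Matrix (Fin K_M) (Fin K) ℝ)
    (hA : A.rank = F) (hPA : (P₁ * A).rank = F)
    (hB : B.rank = F) (hPB : (P₂ * B).rank = F)
    (hF : F ≤ min I_H J_H)
    (hPC : ∀ r : Fin F, ∃ k : Fin K_M, (P_M * C) k r ≠ 0) :
    (unfold1 (contract3 P_M (cp A B C))).rank = F ∧
    (unfold2 (contract3 P_M (cp A B C))).rank = F := by
  constructor
  · rw [unfold1_eq, rank_mul_of_inj _ _ (khatriRao_inj _ _ hB hPC), Matrix.rank_transpose]
    exact hA
  · rw [unfold2_eq, rank_mul_of_inj _ _ (khatriRao_inj _ _ hA hPC), Matrix.rank_transpose]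
    exact hB
end
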